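/- For every n ∈ ℕ and every integer m not divisible by 3, with ω = (−1 + √−3)/2 ∈ ℂ, one has Σ_{k=0}^{n} C(n,k)^2 · ω^{m(2k−n)} = (−1)^n · T_n. -/

import Mathlib

/-- `ω = (-1 + √-3)/2`, a primitive cube root of unity. -/
noncomputable def omegaC : ℂ := (-1 + Real.sqrt 3 * Complex.I) / 2

/-- The central trinomial coefficient: the coefficient of `x^n` in `(x^2+x+1)^n`. -/
def centralTrinomial (n : ℕ) : ℕ :=
  ∑ k ∈ Finset.range (n / 2 + 1), Nat.choose n (2 * k) * Nat.choose (2 * k) k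

/-! With `ζ = ω ^ m`, a primitive cube root of unity, the sum is `ζ ^ (-n)` times
`Σ C(n,k)² (ζ²)^k`, the coefficient of `X ^ n` in `((1 + ζ² X) (1 + X)) ^ n`.
Since `1 + ζ² = -ζ`, the factor `(1 + ζ² X) (1 + X)` equals `1 + Y + Y²` with `Y = -ζ X`, so that
coefficient is `(-ζ) ^ n` times the coefficient of `Y ^ n` in `(1 + Y + Y²) ^ n`, namely `T_n`. -/

open Finset Polynomial

section CommSemiring

variable {R : Type*} [CommSemiring R]

theorem coeff_one_add_X_sq_pow_self (i : ℕ) :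
    ((1 + X ^ 2 : R[X]) ^ i).coeff i = if 2 ∣ i then (i.choose (i / 2) : R) else 0 := by
  rw [show (1 + X ^ 2 : R[X]) ^ i = expand R 2 ((1 + X) ^ i) by simp, coeff_expand two_pos,
    coeff_one_add_X_pow]

theorem coeff_one_add_X_add_X_sq_pow_self (n : ℕ) :
    ((1 + X + X ^ 2 : R[X]) ^ n).coeff n = centralTrinomial n := by
  have hcoeff : ∀ i ∈ range (n + 1),
      ((1 + X ^ 2 : R[X]) ^ i * X ^ (n - i) * (n.choose i : R[X])).coeff n
        = if 2 ∣ i then (n.choose i * i.choose (i / 2) : R) else 0 := by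
    intro i hi
    rw [← C_eq_natCast, coeff_mul_C, coeff_mul_X_pow', if_pos (Nat.sub_le n i),
      Nat.sub_sub_self (Nat.lt_succ_iff.mp (mem_range.mp hi)), coeff_one_add_X_sq_pow_self]
    split_ifs <;> ring
  rw [show (1 + X + X ^ 2 : R[X]) = (1 + X ^ 2) + X by ring, add_pow, finsetSum_coeff,
    sum_congr rfl hcoeff, ← sum_filter, centralTrinomial, Nat.cast_sum]
  refine sum_nbij' (· / 2) (2 * ·) ?_ ?_ ?_ ?_ ?_
  any_goals (intro i hi; simp only [mem_filter, mem_range] at hi ⊢; omega)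
  intro i hi
  obtain ⟨j, rfl⟩ := (mem_filter.mp hi).2
  simp

theorem coeff_one_add_C_mul_X_pow_mul_one_add_X_pow_self (c : R) (n : ℕ) :
    ((1 + C c * X) ^ n * (1 + X) ^ n).coeff n
      = ∑ k ∈ range (n + 1), (n.choose k : R) ^ 2 * c ^ k := by
  have hscale : (1 + C c * X) ^ n = ((1 + X) ^ n).comp (C c * X) := by simp
  rw [coeff_mul, Nat.sum_antidiagonal_eq_sum_range_succ_mk]
  refine sum_congr rfl fun k hk => ?_
  rw [hscale, comp_C_mul_X_coeff, coeff_one_add_X_pow, coeff_one_add_X_pow,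
    Nat.choose_symm (Nat.lt_succ_iff.mp (mem_range.mp hk))]
  ring

end CommSemiring

section CommRing

variable {R : Type*} [CommRing R] {ζ : R}

theorem one_add_C_sq_mul_X_mul_one_add_X_eq_comp (hζ : ζ ^ 2 + ζ + 1 = 0) :
    (1 + C (ζ ^ 2) * X) * (1 + X) = (1 + X + X ^ 2 : R[X]).comp (C (-ζ) * X) := by
  have hC : C ζ ^ 2 + C ζ + 1 = (0 : R[X]) := by simpa using congrArg C hζ
  simp only [add_comp, one_comp, X_comp, pow_comp, C_pow, C_neg]
  linear_combination X * hC

theorem sum_choose_sq_mul_pow_eq_neg_pow_mul_centralTrinomial (hζ : ζ ^ 2 + ζ + 1 = 0) (n : ℕ) :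
    ∑ k ∈ range (n + 1), (n.choose k : R) ^ 2 * (ζ ^ 2) ^ k = (-ζ) ^ n * centralTrinomial n := by
  rw [← coeff_one_add_C_mul_X_pow_mul_one_add_X_pow_self, ← mul_pow,
    one_add_C_sq_mul_X_mul_one_add_X_eq_comp hζ, ← pow_comp, comp_C_mul_X_coeff,
    coeff_one_add_X_add_X_sq_pow_self, mul_comm]

theorem IsPrimitiveRoot.sq_add_self_add_one [IsDomain R] (h : IsPrimitiveRoot ζ 3) :
    ζ ^ 2 + ζ + 1 = 0 := by
  have h3 := h.geom_sum_eq_zero (by norm_num)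
  simp only [sum_range_succ, sum_range_zero, pow_zero, pow_one, zero_add] at h3
  linear_combination h3

end CommRing

theorem omegaC_sq_add_self_add_one : omegaC ^ 2 + omegaC + 1 = 0 := by
  have h3 : ((Real.sqrt 3 : ℝ) : ℂ) ^ 2 = 3 := by
    rw [← Complex.ofReal_pow, Real.sq_sqrt (by norm_num : (0 : ℝ) ≤ 3)]
    norm_num
  unfold omegaC
  linear_combination (Complex.I ^ 2 / 4) * h3 + (3 / 4 : ℂ) * Complex.I_sq

theorem isPrimitiveRoot_omegaC : IsPrimitiveRoot omegaC 3 := by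
  have hne : omegaC ≠ 1 := by
    intro h
    have h3 := omegaC_sq_add_self_add_one
    rw [h] at h3
    norm_num at h3
  rw [IsPrimitiveRoot.iff_orderOf]
  exact orderOf_eq_prime (by linear_combination (omegaC - 1) * omegaC_sq_add_self_add_one) hne

theorem trinomial_omega_power_representation (n : ℕ) (m : ℤ) (hm : ¬ (3 ∣ m)) :
    ∑ k ∈ Finset.range (n + 1), (Nat.choose n k : ℂ) ^ 2
        * omegaC ^ (m * ((2 * k : ℤ) - n))
      = (-1 : ℂ) ^ n * centralTrinomial n := by
  have hζ : IsPrimitiveRoot (omegaC ^ m) 3 := isPrimitiveRoot_omegaC.zpow_of_gcd_eq_one m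
    ((Nat.prime_three.coprime_iff_not_dvd.2 (by omega)).symm)
  set ζ := omegaC ^ m
  have hζ0 : ζ ≠ 0 := hζ.ne_zero (by norm_num)
  have hterm : ∀ k : ℕ, omegaC ^ (m * ((2 * k : ℤ) - n)) = (ζ ^ 2) ^ k * (ζ ^ n)⁻¹ := by
    intro k
    rw [zpow_mul, zpow_sub₀ hζ0, ← pow_mul, div_eq_mul_inv]
    norm_cast
  simp_rw [hterm, ← mul_assoc, ← sum_mul,
    sum_choose_sq_mul_pow_eq_neg_pow_mul_centralTrinomial hζ.sq_add_self_add_one, neg_pow ζ]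
  field_simp
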